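/- arXiv:math/0104026 — 3 statements merged into one kernel-verified Lean document; each statement's English description precedes it below -/
import Mathlib

section
/- For every nonnegative integer n, the sum over k from 0 to n of the inverse binomial coefficient C(n,k)^{-1} equals (n+1)/2^{n+1} times the sum over k from 1 to n+1 of 2^k/k. -/
/-!
Neighbouring inverse binomials of row `n + 1` combine into one of row `n`:
`C(n+1,k)⁻¹ + C(n+1,k+1)⁻¹ = (n+2)/(n+1) · C(n,k)⁻¹`. Summing over `k ≤ n` counts row `n + 1`
twice, less its two end terms `1`, so `S(n) = ∑ₖ C(n,k)⁻¹` satisfies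
`S(n+1) = 1 + (n+2)/(2(n+1)) · S(n)`. The right-hand side satisfies the same recurrence, since its sum gains
the single term `2^(n+2)/(n+2)`, and both sides equal `1` at `n = 0`.
-/

open Finset

section InverseBinomial

variable {K : Type*} [Field K] [CharZero K]

lemma inv_choose_succ_succ (n k : ℕ) :
    ((n + 1).choose (k + 1) : K)⁻¹ = (k + 1) / ((n + 1) * n.choose k) := by
  have h : ((n + 1) * n.choose k : K) = (n + 1).choose (k + 1) * (k + 1) := by
    exact_mod_cast Nat.add_one_mul_choose_eq n k
  rw [h, div_mul_cancel_right₀ (Nat.cast_add_one_ne_zero k)]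

lemma inv_choose_succ {n k : ℕ} (hk : k ≤ n) :
    ((n + 1).choose k : K)⁻¹ = (n + 1 - k) / ((n + 1) * n.choose k) := by
  have h : ((n + 1) * n.choose k : K) = (n + 1).choose k * (n + 1 - k) := by
    have := congrArg (Nat.cast : ℕ → K) (Nat.choose_mul_succ_eq n k)
    push_cast [Nat.cast_sub (Nat.le_succ_of_le hk)] at this
    rw [mul_comm, this]
  have hne : (n + 1 - k : K) ≠ 0 := by
    rw [sub_ne_zero]; exact_mod_cast (Nat.lt_succ_of_le hk).ne'
  rw [h, div_mul_cancel_right₀ hne]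

lemma inv_choose_succ_add_inv_choose_succ_succ {n k : ℕ} (hk : k ≤ n) :
    ((n + 1).choose k : K)⁻¹ + ((n + 1).choose (k + 1) : K)⁻¹ =
      (n + 2) / (n + 1) * (n.choose k : K)⁻¹ := by
  have : (n.choose k : K) ≠ 0 := by exact_mod_cast (Nat.choose_pos hk).ne'
  have : (n + 1 : K) ≠ 0 := Nat.cast_add_one_ne_zero n
  rw [inv_choose_succ hk, inv_choose_succ_succ]
  field_simp
  ring

lemma sum_range_inv_choose_succ (n : ℕ) :
    ∑ k ∈ range (n + 2), ((n + 1).choose k : K)⁻¹ =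
      1 + (n + 2) / (n + 1) / 2 * ∑ k ∈ range (n + 1), (n.choose k : K)⁻¹ := by
  set S := ∑ k ∈ range (n + 2), ((n + 1).choose k : K)⁻¹
  have hlast : ∑ k ∈ range (n + 1), ((n + 1).choose k : K)⁻¹ = S - 1 := by
    simp [S, sum_range_succ _ (n + 1)]
  have hfirst : ∑ k ∈ range (n + 1), ((n + 1).choose (k + 1) : K)⁻¹ = S - 1 := by
    simp [S, sum_range_succ' _ (n + 1)]
  have hpairs : ∑ k ∈ range (n + 1),
      (((n + 1).choose k : K)⁻¹ + ((n + 1).choose (k + 1) : K)⁻¹) =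
        (n + 2) / (n + 1) * ∑ k ∈ range (n + 1), (n.choose k : K)⁻¹ := by
    rw [mul_sum]
    exact sum_congr rfl fun k hk ↦
      inv_choose_succ_add_inv_choose_succ_succ (Nat.lt_succ_iff.mp (mem_range.mp hk))
  rw [sum_add_distrib, hlast, hfirst] at hpairs
  linear_combination hpairs / 2

end InverseBinomial

theorem stmt_0 (n : ℕ) :
    ∑ k ∈ range (n + 1), ((n.choose k : ℚ))⁻¹ =
      ((n : ℚ) + 1) / 2 ^ (n + 1) * ∑ k ∈ Icc 1 (n + 1), (2 : ℚ) ^ k / k := by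
  induction n with
  | zero => norm_num
  | succ n ih =>
    rw [sum_range_inv_choose_succ, ih, sum_Icc_succ_top (b := n + 1) (by omega)]
    push_cast
    field_simp
    ring
end

section
/- For every nonnegative integer n, the sum over k from 0 to n of k·C(n,k)^{-1} equals (1/2^n)·[(n+1)(2^n - 1) + Σ_{k=0}^{n-2} (n-k)(n-k-1)·2^{k-1}/(k+1)]. -/
/-!
By the symmetry `C(n,k) = C(n,n-k)`, `∑ k / C(n,k) = (n/2) ∑ 1 / C(n,k)`. Pairing neighbouring
terms of row `n + 1` gives `1/C(n+1,k) + 1/C(n+1,k+1) = (n+2)/((n+1) C(n,k))`, hence a first order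
recurrence whose solution is `∑ 1 / C(n,k) = (n+1)/2^n ∑_{k ≤ n} 2^k/(k+1)`. On the other side,
partial fractions split `(n-k)(n-k-1)/(k+1)` into `n(n+1)/(k+1)` plus a linear polynomial in `k`,
and the resulting arithmetico-geometric sum cancels `(n+1)(2^n - 1)`.
-/

open Finset

namespace Nat

variable {K : Type*} [Field K] [CharZero K]

lemma add_one_mul_inv_choose_add_inv_choose_succ {n k : ℕ} (hk : k ≤ n) :
    (n + 1) * (((n + 1).choose k : K)⁻¹ + ((n + 1).choose (k + 1) : K)⁻¹) =
      (n + 2) * (n.choose k : K)⁻¹ := by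
  have hup : ((n + 1) * n.choose k : K) = (n + 1).choose (k + 1) * (k + 1) := by
    exact_mod_cast add_one_mul_choose_eq n k
  have hdown : (n.choose k * (n + 1) : K) = (n + 1).choose k * (n + 1 - k) := by
    have := congrArg (Nat.cast (R := K)) (choose_mul_succ_eq n k)
    push_cast [Nat.cast_sub (hk.trans n.le_succ)] at this
    exact this
  have h0 : ((n + 1).choose k : K) ≠ 0 := by
    exact_mod_cast (choose_pos (hk.trans n.le_succ)).ne'
  have h1 : ((n + 1).choose (k + 1) : K) ≠ 0 := by
    exact_mod_cast (choose_pos (succ_le_succ hk)).ne'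
  have h2 : (n.choose k : K) ≠ 0 := by exact_mod_cast (choose_pos hk).ne'
  field_simp
  linear_combination ((n + 1).choose (k + 1) : K) * hdown + ((n + 1).choose k : K) * hup

lemma two_mul_add_one_mul_sum_range_inv_choose_succ (n : ℕ) :
    2 * (n + 1) * ∑ k ∈ range (n + 2), ((n + 1).choose k : K)⁻¹ =
      (n + 2) * ∑ k ∈ range (n + 1), (n.choose k : K)⁻¹ + 2 * (n + 1) := by
  have hpairs : (n + 1) * ∑ k ∈ range (n + 1),
      (((n + 1).choose k : K)⁻¹ + ((n + 1).choose (k + 1) : K)⁻¹) =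
        (n + 2) * ∑ k ∈ range (n + 1), (n.choose k : K)⁻¹ := by
    simp only [mul_sum]
    exact sum_congr rfl fun k hk =>
      add_one_mul_inv_choose_add_inv_choose_succ (mem_range_succ_iff.mp hk)
  have hlast := sum_range_succ (fun k => ((n + 1).choose k : K)⁻¹) (n + 1)
  have hfirst := sum_range_succ' (fun k => ((n + 1).choose k : K)⁻¹) (n + 1)
  simp only [choose_self, choose_zero_right, cast_one, inv_one] at hlast hfirst
  rw [sum_add_distrib] at hpairs
  linear_combination (n + 1 : K) * hlast + (n + 1 : K) * hfirst + hpairs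

lemma two_pow_mul_sum_range_inv_choose (n : ℕ) :
    2 ^ n * ∑ k ∈ range (n + 1), (n.choose k : K)⁻¹ =
      (n + 1) * ∑ k ∈ range (n + 1), (2 : K) ^ k / (k + 1) := by
  induction n with
  | zero => simp
  | succ n ih =>
    have hn : (n + 1 : K) ≠ 0 := by exact_mod_cast n.succ_ne_zero
    have hn2 : (n + 1 + 1 : K) ≠ 0 := by exact_mod_cast (n + 1).succ_ne_zero
    rw [sum_range_succ (fun k => (2 : K) ^ k / (k + 1))]
    push_cast
    rw [mul_add, mul_div_cancel₀ _ hn2]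
    apply mul_left_cancel₀ hn
    linear_combination 2 ^ n * two_mul_add_one_mul_sum_range_inv_choose_succ (K := K) n +
      (n + 2 : K) * ih

lemma two_mul_sum_range_mul_inv_choose (n : ℕ) :
    2 * ∑ k ∈ range (n + 1), (k : K) * (n.choose k : K)⁻¹ =
      n * ∑ k ∈ range (n + 1), (n.choose k : K)⁻¹ := by
  rw [two_mul]
  nth_rw 2 [← sum_range_reflect]
  rw [← sum_add_distrib, mul_sum]
  refine sum_congr rfl fun k hk => ?_
  have hk : k ≤ n := mem_range_succ_iff.mp hk
  rw [add_tsub_cancel_right, choose_symm hk, Nat.cast_sub hk]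
  ring

end Nat

section ArithmeticoGeometric

variable {R : Type*} [CommRing R]

lemma sum_range_natCast_mul_two_pow (m : ℕ) :
    ∑ k ∈ range m, (k : R) * 2 ^ k = (m - 2) * 2 ^ m + 2 := by
  induction m with
  | zero => simp
  | succ m ih =>
    rw [sum_range_succ, ih]
    push_cast
    ring

lemma sum_range_sub_mul_two_pow (n : ℕ) :
    ∑ k ∈ range (n + 1), (2 * n - k : R) * 2 ^ k = 2 * (n + 1) * (2 ^ n - 1) := by
  have hgeom : ∑ k ∈ range (n + 1), (2 : R) ^ k = 2 ^ (n + 1) - 1 := by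
    have := geom_sum_mul (2 : R) (n + 1)
    norm_num at this
    exact this
  simp only [sub_mul, sum_sub_distrib, mul_assoc, ← mul_sum, hgeom,
    sum_range_natCast_mul_two_pow]
  push_cast
  ring

end ArithmeticoGeometric

lemma add_sum_range_pred_eq_mul_sum_range_two_pow_div {K : Type*} [Field K] [CharZero K]
    (n : ℕ) :
    ((n : K) + 1) * (2 ^ n - 1) +
        ∑ k ∈ range (n - 1), ((n : K) - k) * ((n : K) - k - 1) * (2 : K) ^ ((k : ℤ) - 1) / (k + 1) =
      n * (n + 1) / 2 * ∑ k ∈ range (n + 1), (2 : K) ^ k / (k + 1) := by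
  set f : ℕ → K := fun k => ((n : K) - k) * ((n : K) - k - 1) * (2 : K) ^ ((k : ℤ) - 1) / (k + 1)
  -- `(n-k)(n-k-1) = n(n+1) - (2n-k)(k+1)`
  have hterm (k : ℕ) : f k = n * (n + 1) / 2 * (2 ^ k / (k + 1)) - (2 * n - k) * 2 ^ k / 2 := by
    have hk : (k + 1 : K) ≠ 0 := by exact_mod_cast k.succ_ne_zero
    simp only [f, zpow_sub_one₀ (two_ne_zero : (2 : K) ≠ 0), zpow_natCast]
    field_simp
    ring
  -- the terms `k = n - 1` and `k = n` vanish
  have hrange : ∑ k ∈ range (n - 1), f k = ∑ k ∈ range (n + 1), f k := by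
    rcases n with _ | m
    · simp [f]
    · simp [f, sum_range_succ]
  rw [hrange, sum_congr rfl fun k _ => hterm k, sum_sub_distrib, ← mul_sum, ← sum_div,
    sum_range_sub_mul_two_pow]
  ring

theorem stmt_5 (n : ℕ) :
    ∑ k ∈ range (n + 1), (k : ℚ) * ((n.choose k : ℚ))⁻¹ =
      (1 / 2 ^ n) * (((n : ℚ) + 1) * (2 ^ n - 1) +
        ∑ k ∈ range (n - 1),
          ((n : ℚ) - k) * ((n : ℚ) - k - 1) * (2 : ℚ) ^ ((k : ℤ) - 1) / (k + 1)) := by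
  rw [add_sum_range_pred_eq_mul_sum_range_two_pow_div, one_div,
    eq_inv_mul_iff_mul_eq₀ (by positivity)]
  linear_combination (2 ^ n / 2 : ℚ) * Nat.two_mul_sum_range_mul_inv_choose (K := ℚ) n +
    (n / 2 : ℚ) * Nat.two_pow_mul_sum_range_inv_choose (K := ℚ) n
end

section
/- For every nonnegative integer n, the sum over k from 0 to n of C(n,k)^{-2} equals (n+1)^2 times the sum over k from 0 to n of 2/(n-k+1) times Σ_{i=0}^{k} (-1)^i/(n+2+i) · C(k,i). -/
/-!
Partial fractions give `∑ᵢ (-1)ⁱ C(k,i) / (x + i) = k! / (x (x+1) ⋯ (x+k))`, so the inner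
sum is the Beta value `B(k+1, n+2) = k! (n+1)! / (n+k+2)!`. Both `S(n) = ∑ₖ C(n,k)⁻²` and
`T(n) = ∑ₖ B(k+1, n+2) / (n-k+1)` satisfy first-order recurrences found by Zeilberger's
creative telescoping: the summands at `n+1` and `n` combine into `G(k+1) - G(k)` for an
explicit certificate `G`. The two recurrences are compatible with `S(n) = 2 (n+1)² T(n)`,
which holds at `n = 0`.
-/

open Finset Nat

theorem Nat.cast_choose_succ_right_mul {R : Type*} [CommRing R] (n k : ℕ) :
    (n.choose (k + 1) : R) * (k + 1) = n.choose k * ((n : R) - k) := by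
  rcases le_or_gt k n with hk | hk
  · have h := congrArg (Nat.cast : ℕ → R) (choose_succ_right_eq n k)
    push_cast [hk] at h
    exact h
  · simp [choose_eq_zero_of_lt hk, choose_eq_zero_of_lt (hk.trans (lt_add_one k))]

theorem Nat.cast_choose_mul_succ {R : Type*} [CommRing R] (n k : ℕ) :
    (n.choose k : R) * (n + 1) = (n + 1).choose k * ((n : R) + 1 - k) := by
  rcases le_or_gt k (n + 1) with hk | hk
  · have h := congrArg (Nat.cast : ℕ → R) (choose_mul_succ_eq n k)
    push_cast [hk] at h
    exact h
  · simp [choose_eq_zero_of_lt hk, choose_eq_zero_of_lt ((lt_add_one n).trans hk)]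

theorem Finset.mul_sum_range_add_two_eq_of_telescoping {R : Type*} [CommRing R]
    (f g G : ℕ → R) (a b : R) (n : ℕ) (h : ∀ k < n, a * g k - b * f k = G (k + 1) - G k) :
    a * ∑ k ∈ range (n + 2), g k =
      b * ∑ k ∈ range (n + 1), f k + (G n - G 0) + a * (g n + g (n + 1)) - b * f n := by
  have telescope := sum_range_sub G n
  rw [← sum_congr rfl fun k hk ↦ h k (mem_range.mp hk), sum_sub_distrib, ← mul_sum,
    ← mul_sum] at telescope
  rw [sum_range_succ, sum_range_succ, sum_range_succ]
  linear_combination telescope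

theorem sum_neg_one_pow_div_add_mul_choose {K : Type*} [Field K] (k : ℕ) (x : K)
    (hx : ∏ i ∈ range (k + 1), (x + i) ≠ 0) :
    ∑ i ∈ range (k + 1), (-1 : K) ^ i / (x + i) * k.choose i =
      k ! / ∏ i ∈ range (k + 1), (x + i) := by
  induction k generalizing x with
  | zero => simp
  | succ k ih =>
    have peel_last : ∏ i ∈ range (k + 1 + 1), (x + i) =
        (∏ i ∈ range (k + 1), (x + i)) * (x + (k + 1)) := by
      rw [prod_range_succ]; push_cast; rfl
    have peel_first : ∏ i ∈ range (k + 1 + 1), (x + i) =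
        (∏ i ∈ range (k + 1), (x + 1 + i)) * x := by
      rw [prod_range_succ', Nat.cast_zero, add_zero]
      exact congrArg (· * x) (prod_congr rfl fun i _ ↦ by push_cast; ring)
    have shift : ∑ i ∈ range (k + 1), (-1 : K) ^ (i + 1) / (x + (i + 1 : ℕ)) * k.choose i =
        -∑ i ∈ range (k + 1), (-1 : K) ^ i / (x + 1 + i) * k.choose i := by
      rw [← sum_neg_distrib]
      exact sum_congr rfl fun i _ ↦ by push_cast; ring
    have pascal := sum_choose_succ_mul (fun i _ ↦ (-1 : K) ^ i / (x + i)) k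
    simp only [mul_comm (Nat.cast _ : K)] at pascal
    rw [pascal, shift, ih x (left_ne_zero_of_mul (peel_last ▸ hx)),
      ih (x + 1) (left_ne_zero_of_mul (peel_first ▸ hx)), peel_last]
    rw [peel_last] at hx
    rw [peel_first] at peel_last
    set P := ∏ i ∈ range (k + 1), (x + i)
    set Q := ∏ i ∈ range (k + 1), (x + 1 + i)
    have hP : P ≠ 0 := left_ne_zero_of_mul hx
    have hQ : Q ≠ 0 := left_ne_zero_of_mul (peel_last ▸ hx)
    have hxk : x + (k + 1) ≠ 0 := right_ne_zero_of_mul hx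
    field_simp
    push_cast [factorial_succ]
    linear_combination (k ! : K) * peel_last

def betaTerm (n k : ℕ) : ℚ := k ! * (n + 1)! / (n + k + 2)!

theorem betaTerm_zero (n : ℕ) : betaTerm n 0 = 1 / (n + 2) := by
  rw [betaTerm, add_zero, factorial_zero, factorial_succ (n + 1)]
  push_cast
  field_simp
  ring

theorem betaTerm_succ_right (n k : ℕ) :
    betaTerm n (k + 1) = betaTerm n k * (k + 1) / (n + k + 3) := by
  rw [betaTerm, betaTerm, show n + (k + 1) + 2 = n + k + 2 + 1 by ring, factorial_succ (n + k + 2),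
    factorial_succ k]
  push_cast
  field_simp
  ring

theorem betaTerm_succ_left (n k : ℕ) :
    betaTerm (n + 1) k = betaTerm n k * (n + 2) / (n + k + 3) := by
  rw [betaTerm, betaTerm, show n + 1 + k + 2 = n + k + 2 + 1 by ring, factorial_succ (n + k + 2),
    factorial_succ (n + 1)]
  push_cast
  field_simp
  ring

theorem cast_factorial_mul_prod_range (n k : ℕ) :
    ((n + 1)! : ℚ) * ∏ i ∈ range (k + 1), ((n : ℚ) + 2 + i) = (n + k + 2)! := by
  have h := factorial_mul_ascFactorial (n + 1) (k + 1)
  rw [ascFactorial_eq_prod_range, show n + 1 + (k + 1) = n + k + 2 by ring] at h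
  exact_mod_cast h

theorem sum_alternating_choose_div_eq_betaTerm (n k : ℕ) :
    ∑ i ∈ range (k + 1), (-1 : ℚ) ^ i / ((n : ℚ) + 2 + i) * k.choose i = betaTerm n k := by
  have hP : ∏ i ∈ range (k + 1), ((n : ℚ) + 2 + i) ≠ 0 := by positivity
  rw [sum_neg_one_pow_div_add_mul_choose k _ hP, betaTerm, ← cast_factorial_mul_prod_range]
  field_simp

def invChooseSqSum (n : ℕ) : ℚ := ∑ k ∈ range (n + 1), ((n.choose k : ℚ)⁻¹) ^ 2

def invChooseSqCert (n k : ℕ) : ℚ :=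
  ((n : ℚ) + 1 - k) ^ 2 * (2 * k - 3 * (n + 2)) * ((n.choose k : ℚ)⁻¹) ^ 2

theorem invChooseSq_telescoping (n k : ℕ) (hk : k < n) :
    2 * ((n : ℚ) + 1) ^ 2 * (2 * n + 5) * (((n + 1).choose k : ℚ)⁻¹) ^ 2
      - ((n : ℚ) + 2) ^ 3 * ((n.choose k : ℚ)⁻¹) ^ 2 =
      invChooseSqCert n (k + 1) - invChooseSqCert n k := by
  have hkn : (k : ℚ) + 1 ≤ n := by exact_mod_cast hk
  have hnk : (n : ℚ) - k ≠ 0 := by linarith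
  have hnk' : (n : ℚ) + 1 - k ≠ 0 := by linarith
  have e1 := Nat.cast_choose_succ_right_mul (R := ℚ) n k
  have e2 := Nat.cast_choose_mul_succ (R := ℚ) n k
  rw [invChooseSqCert, invChooseSqCert, eq_div_of_mul_eq (by positivity) e1,
    eq_div_of_mul_eq hnk' e2.symm]
  push_cast
  field_simp
  ring

theorem invChooseSqSum_succ (n : ℕ) :
    2 * ((n : ℚ) + 1) ^ 2 * (2 * n + 5) * invChooseSqSum (n + 1) =
      ((n : ℚ) + 2) ^ 3 * invChooseSqSum n + 6 * ((n : ℚ) + 1) ^ 2 * (n + 2) := by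
  have h := mul_sum_range_add_two_eq_of_telescoping _ _ _ _ _ n (invChooseSq_telescoping n)
  rw [invChooseSqSum, invChooseSqSum, h]
  simp only [invChooseSqCert, choose_self, choose_zero_right, choose_succ_self_right]
  push_cast
  field_simp
  ring

def betaSum (n : ℕ) : ℚ := ∑ k ∈ range (n + 1), betaTerm n k / ((n : ℚ) - k + 1)

def betaCert (n k : ℕ) : ℚ :=
  (n + 2) * ((4 * n + 7) * k - k ^ 2 - 3 * (n + 1) * (n + 2)) /
    (((n : ℚ) - k + 2) * (n - k + 1)) * betaTerm n k

theorem betaTerm_telescoping (n k : ℕ) (hk : k < n) :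
    2 * ((n : ℚ) + 2) * (2 * n + 5) * (betaTerm (n + 1) k / (((n + 1 : ℕ) : ℚ) - k + 1))
      - ((n : ℚ) + 2) ^ 2 * (betaTerm n k / ((n : ℚ) - k + 1)) =
      betaCert n (k + 1) - betaCert n k := by
  have hkn : (k : ℚ) + 1 ≤ n := by exact_mod_cast hk
  have h2 : (n : ℚ) - k + 1 ≠ 0 := by linarith
  have h3 : (n : ℚ) - k + 2 ≠ 0 := by linarith
  have h4 : (n : ℚ) - (k + 1) + 1 ≠ 0 := by linarith
  have h5 : (n : ℚ) - (k + 1) + 2 ≠ 0 := by linarith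
  have h6 : (n : ℚ) + 1 - k + 1 ≠ 0 := by linarith
  rw [betaCert, betaCert, betaTerm_succ_left, betaTerm_succ_right]
  push_cast
  field_simp
  ring

theorem betaSum_succ (n : ℕ) :
    2 * ((n : ℚ) + 2) * (2 * n + 5) * betaSum (n + 1) = ((n : ℚ) + 2) ^ 2 * betaSum n + 3 := by
  have h := mul_sum_range_add_two_eq_of_telescoping _ _ _ _ _ n (betaTerm_telescoping n)
  rw [betaSum, h, ← betaSum]
  simp only [betaCert, betaTerm_succ_right, betaTerm_succ_left, betaTerm_zero]
  push_cast
  simp only [sub_self, sub_zero, zero_add, add_sub_cancel_left]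
  field_simp
  ring

theorem invChooseSqSum_eq (n : ℕ) : invChooseSqSum n = 2 * ((n : ℚ) + 1) ^ 2 * betaSum n := by
  induction n with
  | zero => norm_num [invChooseSqSum, betaSum, betaTerm]
  | succ n ih =>
    have hA := invChooseSqSum_succ n
    have hB := betaSum_succ n
    refine mul_left_cancel₀ (by positivity : 2 * ((n : ℚ) + 1) ^ 2 * (2 * n + 5) ≠ 0) ?_
    push_cast
    linear_combination hA + ((n : ℚ) + 2) ^ 3 * ih - 2 * ((n : ℚ) + 1) ^ 2 * (n + 2) * hB

theorem stmt_10 (n : ℕ) :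
    ∑ k ∈ range (n + 1), (((n.choose k : ℚ))⁻¹) ^ 2 =
      ((n : ℚ) + 1) ^ 2 * ∑ k ∈ range (n + 1),
        2 / ((n : ℚ) - k + 1) *
          ∑ i ∈ range (k + 1), (-1 : ℚ) ^ i / ((n : ℚ) + 2 + i) * (k.choose i : ℚ) := by
  simp only [sum_alternating_choose_div_eq_betaTerm]
  rw [← invChooseSqSum, invChooseSqSum_eq, betaSum, mul_sum, mul_sum]
  exact sum_congr rfl fun k _ ↦ by ring
end
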